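/- arXiv:1710.09999 — 2 statements merged into one kernel-verified Lean document; each statement's English description precedes it below -/
import Mathlib

section
/- In a multiplicity-free semi-simple tensor system over a commutative ring R, for any L-tuple λ̃ = (λ_1,…,λ_L), any ν, ν' ∈ I, and any 1 ≤ i ≤ L−1, the two-site projection operators are orthogonal idempotents: p_i^{(ν)} p_i^{(ν')} = δ_ν^{ν'} p_i^{(ν)} as operators on H_{λ̃}. -/
open scoped Classical
open Fin.NatCast

noncomputable section

/-- A multiplicity-free semi-simple tensor system over a commutative ring `R`,
with index set `I`, fusion constants `N`, and F-moves `F`, `Fbar`.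
`F a b c d e f` denotes `(F^{abc}_d)^e_f` and `Fbar a b c d f e` denotes `(F̄^{abc}_d)^f_e`. -/
structure TensorSystem (R : Type*) [CommRing R] (I : Type*) where
  N : I → I → I → ℕ
  F : I → I → I → I → I → I → R
  Fbar : I → I → I → I → I → I → R
  N_le_one : ∀ a b c, N a b c ≤ 1
  N_assoc : ∀ a b c d, (∑ᶠ e, N a b e * N e c d) = ∑ᶠ e, N a e d * N b c e
  N_finite : ∀ a b, (Function.support fun c => N a b c).Finite
  F_vanish : ∀ a b c d e f, N a b e * N b c f * N a f d * N e c d = 0 → F a b c d e f = 0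
  Fbar_vanish : ∀ a b c d e f, N a b e * N b c f * N a f d * N e c d = 0 → Fbar a b c d f e = 0
  pentagon : ∀ a b c d e f g k l,
      (∑ᶠ h, F a b c g f h * F a h d e g k * F b c d k h l) = F f c d e g l * F a b l e f k
  F_Fbar : ∀ a b c d e e',
      (∑ᶠ f, F a b c d e f * Fbar a b c d f e')
        = (if e = e' then (1 : R) else 0) * (N a b e : R) * (N e c d : R)
  Fbar_F : ∀ a b c d f f',
      (∑ᶠ e, Fbar a b c d f' e * F a b c d e f)
        = (if f = f' then (1 : R) else 0) * (N b c f : R) * (N a f d : R)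

namespace TensorSystem

variable {R : Type*} [CommRing R] {I : Type*}

/-- `μ = (μ₀, μ₁, …, μ_L)` is a fusion path for the tuple `λ̃ = (lam 1, …, lam L)`:
`μ₀ ∈ I0` and `N_{μ_{i-1} λ_i}^{μ_i} = 1` for `1 ≤ i ≤ L`. -/
def IsPath (TS : TensorSystem R I) (L : ℕ) (I0 : Set I) (lam : ℕ → I)
    (μ : Fin (L + 1) → I) : Prop :=
  μ 0 ∈ I0 ∧ ∀ i : ℕ, 1 ≤ i → i ≤ L →
    TS.N (μ ((i - 1 : ℕ) : Fin (L + 1))) (lam i) (μ ((i : ℕ) : Fin (L + 1))) = 1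

/-- Matrix element `⟨μ'| p_i^{(ν)} |μ⟩` of the two-site projection operator. -/
def pMat (TS : TensorSystem R I) (L : ℕ) (lam : ℕ → I) (i : ℕ) (ν : I)
    (μ' μ : Fin (L + 1) → I) : R :=
  (∏ j ∈ Finset.univ.erase ((i : ℕ) : Fin (L + 1)), if μ j = μ' j then (1 : R) else 0)
    * TS.Fbar (μ ((i - 1 : ℕ) : Fin (L + 1))) (lam i) (lam (i + 1))
        (μ ((i + 1 : ℕ) : Fin (L + 1))) ν (μ' ((i : ℕ) : Fin (L + 1)))
    * TS.F (μ ((i - 1 : ℕ) : Fin (L + 1))) (lam i) (lam (i + 1))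
        (μ ((i + 1 : ℕ) : Fin (L + 1))) (μ ((i : ℕ) : Fin (L + 1))) ν

/-- Matrix elements of the composition of two operators on `H_{λ̃}`,
summing over the fusion-path basis. -/
def mulMat (TS : TensorSystem R I) (L : ℕ) (I0 : Set I) (lam : ℕ → I)
    (A B : (Fin (L + 1) → I) → (Fin (L + 1) → I) → R)
    (μ' μ : Fin (L + 1) → I) : R :=
  ∑ᶠ μ'' ∈ {x : Fin (L + 1) → I | TS.IsPath L I0 lam x}, A μ' μ'' * B μ'' μ

/-- Two operators on `H_{λ̃}` are equal iff all their matrix elements between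
fusion-path basis vectors agree. -/
def MatEqOn (TS : TensorSystem R I) (L : ℕ) (I0 : Set I) (lam : ℕ → I)
    (A B : (Fin (L + 1) → I) → (Fin (L + 1) → I) → R) : Prop :=
  ∀ μ' μ : Fin (L + 1) → I, TS.IsPath L I0 lam μ' → TS.IsPath L I0 lam μ → A μ' μ = B μ' μ

/-- Extended fusion numbers `N_{a a₁ ⋯ aₙ}^b` along a list `[a₁, …, aₙ]`. -/
def Nseq (TS : TensorSystem R I) : I → List I → I → ℕ
  | a, [], b => if a = b then 1 else 0
  | a, c :: rest, b => ∑ᶠ x, TS.N a c x * Nseq TS x rest b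

/-- `ν` acts one-dimensionally on the left of `μ`. -/
def ActsOneDimLeft (TS : TensorSystem R I) (ν μ : I) : Prop :=
  (∑ᶠ μ' : I, TS.N ν μ μ') = 1

/-- `ν` acts one-dimensionally on the right of `μ`. -/
def ActsOneDimRight (TS : TensorSystem R I) (ν μ : I) : Prop :=
  (∑ᶠ μ' : I, TS.N μ ν μ') = 1

end TensorSystem

/-- Matrix elements of the identity operator. -/
def deltaMat {R : Type*} [CommRing R] {I : Type*} (L : ℕ)
    (μ' μ : Fin (L + 1) → I) : R :=
  ∏ j : Fin (L + 1), if μ j = μ' j then (1 : R) else 0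

/-- Scalar multiple of a matrix of operator matrix elements. -/
def smulMat {R : Type*} [CommRing R] {α : Sort*} (c : R) (A : α → α → R) : α → α → R :=
  fun x y => c * A x y

/-
Both operators act only on the intermediate label `μ_i`, and there
`⟨μ'| p_i^{(ν)} |μ⟩ = (F̄^{a λ_i λ_{i+1}}_d)^ν_{μ'_i} (F^{a λ_i λ_{i+1}}_d)^{μ_i}_ν` with
`a = μ_{i-1}`, `d = μ_{i+1}`. In the product the intermediate path contributes
`Σ_x (F̄)^{ν'}_x (F)^x_ν = δ_{νν'} N_{λ_iλ_{i+1}}^ν N_{aν}^d` by (F.4), and the two fusion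
constants can be dropped because `(F)^{μ_i}_ν` already vanishes when one of them does.
Intermediate paths `x` that are not admissible contribute nothing, by (F.1).
-/

open Function

theorem finsum_mem_eq_finsum_comp_of_support_subset_range {α β M : Type*} [AddCommMonoid M]
    {S : Set α} {f : α → M} {g : β → α} (hg : Injective g) (hf : support f ⊆ Set.range g)
    (hS : ∀ y, f (g y) ≠ 0 → g y ∈ S) :
    ∑ᶠ x ∈ S, f x = ∑ᶠ y, f (g y) := by
  rw [← finsum_mem_range hg]
  refine finsum_mem_inter_support_eq' f S _ fun x hx => ⟨fun _ => hf hx, ?_⟩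
  rintro ⟨y, rfl⟩
  exact hS y hx

theorem Fin.natCast_ne_natCast {L m k : ℕ} (hm : m ≤ L) (hk : k ≤ L) (h : m ≠ k) :
    (m : Fin (L + 1)) ≠ k := fun e => h <| by
  simpa [Fin.val_cast_of_lt (Nat.lt_succ_of_le hm), Fin.val_cast_of_lt (Nat.lt_succ_of_le hk)]
    using congrArg Fin.val e

theorem Function.update_natCast_of_ne {α : Type*} {L i m : ℕ} (μ : Fin (L + 1) → α)
    (x : α) (hm : m ≤ L) (hi : i ≤ L) (h : m ≠ i) :
    update μ (i : Fin (L + 1)) x m = μ m :=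
  update_of_ne (Fin.natCast_ne_natCast hm hi h) _ _

namespace TensorSystem

variable {R : Type*} [CommRing R] {I : Type*} (TS : TensorSystem R I)

theorem N_eq_zero_or_one (a b c : I) : TS.N a b c = 0 ∨ TS.N a b c = 1 := by
  have := TS.N_le_one a b c
  omega

theorem F_eq_zero_of_N_left {a b c d e f : I} (h : TS.N a b e * TS.N e c d = 0) :
    TS.F a b c d e f = 0 :=
  TS.F_vanish a b c d e f <| by
    rcases Nat.mul_eq_zero.mp h with h | h <;> simp [h]

theorem F_eq_zero_of_N_right {a b c d e f : I} (h : TS.N b c f * TS.N a f d = 0) :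
    TS.F a b c d e f = 0 :=
  TS.F_vanish a b c d e f <| by
    rcases Nat.mul_eq_zero.mp h with h | h <;> simp [h]

theorem support_Fbar_mul_F_finite (a b c d f f' : I) :
    (support fun e => TS.Fbar a b c d f' e * TS.F a b c d e f).Finite := by
  refine (TS.N_finite a b).subset fun e he => ?_
  rw [mem_support] at he ⊢
  intro hab
  exact he (by rw [TS.F_eq_zero_of_N_left (by rw [hab, zero_mul]), mul_zero])

theorem F_mul_finsum_Fbar_mul_F (a b c d e f f' : I) :
    TS.F a b c d e f' * ∑ᶠ x, TS.Fbar a b c d f' x * TS.F a b c d x f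
      = if f = f' then TS.F a b c d e f else 0 := by
  rw [TS.Fbar_F]
  split_ifs with h
  · subst h
    rcases TS.N_eq_zero_or_one b c f with hbc | hbc
    · simp [TS.F_eq_zero_of_N_right (a := a) (d := d) (e := e) (by rw [hbc, zero_mul])]
    rcases TS.N_eq_zero_or_one a f d with had | had
    · simp [TS.F_eq_zero_of_N_right (b := b) (c := c) (e := e) (by rw [had, mul_zero])]
    simp [hbc, had]
  · simp

variable {L : ℕ} {lam : ℕ → I} {i : ℕ}

theorem isPath_update {I0 : Set I} {μ : Fin (L + 1) → I} (hμ : TS.IsPath L I0 lam μ)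
    (hi : 1 ≤ i) (hiL : i + 1 ≤ L) {x : I}
    (hl : TS.N (μ ((i - 1 : ℕ) : Fin (L + 1))) (lam i) x = 1)
    (hr : TS.N x (lam (i + 1)) (μ ((i + 1 : ℕ) : Fin (L + 1))) = 1) :
    TS.IsPath L I0 lam (update μ (i : Fin (L + 1)) x) := by
  have hne : ∀ m ≤ L, m ≠ i → update μ (i : Fin (L + 1)) x m = μ m := fun m hm h =>
    update_natCast_of_ne μ x hm (by omega) h
  have h0 := hne 0 (Nat.zero_le L) (by omega)
  rw [Nat.cast_zero] at h0
  refine ⟨h0 ▸ hμ.1, fun j hj hjL => ?_⟩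
  obtain rfl | rfl | hj' : j = i ∨ j = i + 1 ∨ (j ≠ i ∧ j - 1 ≠ i) := by omega
  · rwa [hne _ (by omega) (by omega), update_self]
  · rwa [Nat.add_sub_cancel, update_self, hne _ hiL (by omega)]
  · rw [hne _ (by omega) hj'.2, hne _ hjL hj'.1]
    exact hμ.2 j hj hjL

theorem pMat_eq_zero_of_ne {ν : I} {μ' μ : Fin (L + 1) → I} {j : Fin (L + 1)}
    (hj : j ≠ (i : Fin (L + 1))) (h : μ j ≠ μ' j) : TS.pMat L lam i ν μ' μ = 0 := by
  rw [pMat, Finset.prod_eq_zero (Finset.mem_erase.mpr ⟨hj, Finset.mem_univ j⟩) (if_neg h)]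
  ring

theorem pMat_of_eqOn {ν : I} {μ' μ : Fin (L + 1) → I}
    (h : ∀ j ≠ (i : Fin (L + 1)), μ j = μ' j) :
    TS.pMat L lam i ν μ' μ
      = TS.Fbar (μ ((i - 1 : ℕ) : Fin (L + 1))) (lam i) (lam (i + 1))
          (μ ((i + 1 : ℕ) : Fin (L + 1))) ν (μ' (i : Fin (L + 1)))
        * TS.F (μ ((i - 1 : ℕ) : Fin (L + 1))) (lam i) (lam (i + 1))
          (μ ((i + 1 : ℕ) : Fin (L + 1))) (μ (i : Fin (L + 1))) ν := by
  rw [pMat, Finset.prod_eq_one fun j hj => if_pos (h j (Finset.mem_erase.mp hj).1), one_mul]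

theorem mulMat_pMat_eq_zero {I0 : Set I} {ν ν' : I} {μ' μ : Fin (L + 1) → I}
    {j : Fin (L + 1)} (hj : j ≠ (i : Fin (L + 1))) (h : μ j ≠ μ' j) :
    TS.mulMat L I0 lam (TS.pMat L lam i ν) (TS.pMat L lam i ν') μ' μ = 0 := by
  refine finsum_mem_eq_zero_of_forall_eq_zero fun μ'' _ => ?_
  by_cases h'' : μ'' j = μ' j
  · rw [TS.pMat_eq_zero_of_ne (μ' := μ'') hj (by rwa [h'']), mul_zero]
  · rw [TS.pMat_eq_zero_of_ne (μ := μ'') hj h'', zero_mul]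

theorem mulMat_pMat_of_eqOn {I0 : Set I} {ν ν' : I} {μ' μ : Fin (L + 1) → I}
    (hμ : TS.IsPath L I0 lam μ) (hi : 1 ≤ i) (hiL : i + 1 ≤ L)
    (h : ∀ j ≠ (i : Fin (L + 1)), μ j = μ' j) :
    TS.mulMat L I0 lam (TS.pMat L lam i ν) (TS.pMat L lam i ν') μ' μ
      = TS.Fbar (μ ((i - 1 : ℕ) : Fin (L + 1))) (lam i) (lam (i + 1))
          (μ ((i + 1 : ℕ) : Fin (L + 1))) ν (μ' (i : Fin (L + 1)))
        * (TS.F (μ ((i - 1 : ℕ) : Fin (L + 1))) (lam i) (lam (i + 1))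
            (μ ((i + 1 : ℕ) : Fin (L + 1))) (μ (i : Fin (L + 1))) ν'
          * ∑ᶠ x, TS.Fbar (μ ((i - 1 : ℕ) : Fin (L + 1))) (lam i) (lam (i + 1))
              (μ ((i + 1 : ℕ) : Fin (L + 1))) ν' x
            * TS.F (μ ((i - 1 : ℕ) : Fin (L + 1))) (lam i) (lam (i + 1))
              (μ ((i + 1 : ℕ) : Fin (L + 1))) x ν) := by
  set a := μ ((i - 1 : ℕ) : Fin (L + 1))
  set d := μ ((i + 1 : ℕ) : Fin (L + 1))
  have hterm : ∀ x, TS.pMat L lam i ν μ' (update μ (i : Fin (L + 1)) x)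
        * TS.pMat L lam i ν' (update μ (i : Fin (L + 1)) x) μ
      = TS.Fbar a (lam i) (lam (i + 1)) d ν (μ' i)
        * (TS.F a (lam i) (lam (i + 1)) d (μ i) ν'
          * (TS.Fbar a (lam i) (lam (i + 1)) d ν' x * TS.F a (lam i) (lam (i + 1)) d x ν)) := by
    intro x
    rw [TS.pMat_of_eqOn fun j hj => (update_of_ne hj _ _).trans (h j hj),
      TS.pMat_of_eqOn fun j hj => (update_of_ne hj _ _).symm, update_self,
      update_natCast_of_ne μ x (by omega) (by omega) (by omega),
      update_natCast_of_ne μ x hiL (by omega) (by omega)]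
    ring
  have hsupp : support (fun μ'' => TS.pMat L lam i ν μ' μ'' * TS.pMat L lam i ν' μ'' μ)
      ⊆ Set.range (update μ (i : Fin (L + 1))) := by
    refine fun μ'' hμ'' => ⟨μ'' i, (eq_update_iff.mpr ⟨rfl, fun j hj => ?_⟩).symm⟩
    by_contra hne
    exact hμ'' (mul_eq_zero_of_right _ (TS.pMat_eq_zero_of_ne hj (Ne.symm hne)))
  have hpath : ∀ x, TS.pMat L lam i ν μ' (update μ (i : Fin (L + 1)) x)
        * TS.pMat L lam i ν' (update μ (i : Fin (L + 1)) x) μ ≠ 0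
      → update μ (i : Fin (L + 1)) x ∈ {x | TS.IsPath L I0 lam x} := by
    intro x hx
    have hN : TS.N a (lam i) x * TS.N x (lam (i + 1)) d ≠ 0 := fun h0 =>
      hx (by rw [hterm, TS.F_eq_zero_of_N_left h0]; ring)
    obtain ⟨hl, hr⟩ := Nat.mul_ne_zero_iff.mp hN
    exact TS.isPath_update hμ hi hiL ((TS.N_eq_zero_or_one _ _ _).resolve_left hl)
      ((TS.N_eq_zero_or_one _ _ _).resolve_left hr)
  have hfin := TS.support_Fbar_mul_F_finite a (lam i) (lam (i + 1)) d ν ν'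
  rw [mulMat, finsum_mem_eq_finsum_comp_of_support_subset_range (update_injective μ _) hsupp
      hpath, finsum_congr hterm, mul_finsum' _ _ hfin,
    mul_finsum' _ _ (hfin.subset (support_mul_subset_right _ _))]

end TensorSystem

theorem projection_operators_orthogonal_idempotent_general
    {R : Type*} [CommRing R] {I : Type*}
    (TS : TensorSystem R I) (L : ℕ) (I0 : Set I)
    (lam : ℕ → I) (ν ν' : I) (i : ℕ) (hi : 1 ≤ i) (hiL : i + 1 ≤ L) :
    TS.MatEqOn L I0 lam
      (TS.mulMat L I0 lam
      (TS.pMat L lam (i) ν)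
      (TS.pMat L lam (i) ν'))
      (smulMat (if ν = ν' then (1 : R) else 0) (TS.pMat L lam (i) ν)) := by
  intro μ' μ _ hμ
  by_cases h : ∀ j ≠ (i : Fin (L + 1)), μ j = μ' j
  · rw [TS.mulMat_pMat_of_eqOn hμ hi hiL h, TS.F_mul_finsum_Fbar_mul_F, smulMat,
      TS.pMat_of_eqOn h]
    split_ifs <;> simp
  · obtain ⟨j, hj, hne⟩ := not_forall₂.mp h
    rw [TS.mulMat_pMat_eq_zero hj hne, smulMat, TS.pMat_eq_zero_of_ne hj hne, mul_zero]

/-- two-site projection operators are orthogonal idempotents. -/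
theorem projection_operators_orthogonal_idempotent
    {R : Type*} [CommRing R] {I : Type*}
    (TS : TensorSystem R I) (L : ℕ) (I0 : Set I) (hI0 : I0.Finite)
    (lam : ℕ → I) (ν ν' : I) (i : ℕ) (hi : 1 ≤ i) (hiL : i + 1 ≤ L) :
    TS.MatEqOn L I0 lam
      (TS.mulMat L I0 lam
      (TS.pMat L lam (i) ν)
      (TS.pMat L lam (i) ν'))
      (smulMat (if ν = ν' then (1 : R) else 0) (TS.pMat L lam (i) ν)) :=
  projection_operators_orthogonal_idempotent_general TS L I0 lam ν ν' i hi hiL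
end
end

section
/- In a multiplicity-free semi-simple tensor system over a commutative ring R, for any L-tuple λ̃ = (λ_1,…,λ_L), any ν_1, ν_2, ν_3 ∈ I, any 1 ≤ i ≤ L−2, and any μ, μ''' ∈ B_{λ̃}, the triple product of projection operators has matrix elements ⟨μ'''| p_i^{(ν_3)} p_{i+1}^{(ν_2)} p_i^{(ν_1)} |μ⟩ = Σ_{υ∈I} (Π_{j≠i,i+1} δ_{μ_j}^{μ_j'''}) (F^{λ_iλ_{i+1}λ_{i+2}}_{υ})^{ν_1}_{ν_2} (F̄^{λ_iλ_{i+1}λ_{i+2}}_{υ})^{ν_2}_{ν_3} (F̄^{μ_{i-1}λ_iλ_{i+1}}_{μ_{i+1}'''})^{ν_3}_{μ_i'''} (F^{μ_{i-1}λ_iλ_{i+1}}_{μ_{i+1}})^{μ_i}_{ν_1} (F^{μ_{i-1}ν_1λ_{i+2}}_{μ_{i+2}})^{μ_{i+1}}_{υ} (F̄^{μ_{i-1}ν_3λ_{i+2}}_{μ_{i+2}})^{υ}_{μ_{i+1}'''}. -/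
open scoped Classical
open Fin.NatCast

noncomputable section

/-!
Only paths that agree with `μ` and `μ'''` away from the sites `i` and `i + 1` contribute, and
the middle factor `p_{i+1}` forces the two intermediate paths to carry the same label `σ` at
site `i`. The matrix element therefore collapses to a single sum over `σ`, which is turned into
the sum over `υ` by two instances of the pentagon equation, each solved for some of its F-moves
with the orthogonality relations (F.3), (F.4).
-/

open Function

theorem Fin.natCast_ne_natCast_s3 {n a b : ℕ} (ha : a ≤ n) (hb : b ≤ n) (h : a ≠ b) :
    (a : Fin (n + 1)) ≠ b := fun e =>
  h (le_antisymm ((Fin.natCast_le_natCast ha hb).1 e.le) ((Fin.natCast_le_natCast hb ha).1 e.ge))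

theorem finsum_comm_of_finite {α β M : Type*} [AddCommMonoid M] {f : α → β → M}
    {s : Set α} {t : Set β} (hs : s.Finite) (ht : t.Finite)
    (h : ∀ a b, f a b ≠ 0 → a ∈ s ∧ b ∈ t) :
    ∑ᶠ a, ∑ᶠ b, f a b = ∑ᶠ b, ∑ᶠ a, f a b := by
  have hrow : ∀ a, ∑ᶠ b, f a b = ∑ b ∈ ht.toFinset, f a b := fun a =>
    finsum_eq_sum_of_support_subset _ fun b hb => by simpa using (h a b hb).2
  have hcol : ∀ b, ∑ᶠ a, f a b = ∑ a ∈ hs.toFinset, f a b := fun b =>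
    finsum_eq_sum_of_support_subset _ fun a ha => by simpa using (h a b ha).1
  rw [finsum_congr hrow, finsum_congr hcol, finsum_eq_sum_of_support_subset (s := hs.toFinset),
    finsum_eq_sum_of_support_subset (s := ht.toFinset), Finset.sum_comm]
  · intro b hb
    obtain ⟨a, -, ha⟩ := Finset.exists_ne_zero_of_sum_ne_zero hb
    simpa using (h a b ha).2
  · intro a ha
    obtain ⟨b, -, hb⟩ := Finset.exists_ne_zero_of_sum_ne_zero ha
    simpa using (h a b hb).1

theorem finsum_mem_eq_finsum_update {α β M : Type*} [DecidableEq α] [AddCommMonoid M]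
    {S : Set (α → β)} {g : (α → β) → M} (f : α → β) (a : α)
    (h : ∀ w, g w ≠ 0 → w ∈ S ∧ ∀ x ≠ a, w x = f x) :
    ∑ᶠ w ∈ S, g w = ∑ᶠ b, g (update f a b) := by
  rw [← finsum_mem_range (update_injective f a)]
  refine finsum_mem_inter_support_eq' _ _ _ fun w hw => ?_
  obtain ⟨hS, hagree⟩ := h w hw
  exact iff_of_true hS ⟨w a, (eq_update_iff.mpr ⟨rfl, hagree⟩).symm⟩

theorem finsum_ite_eq {α M : Type*} [AddCommMonoid M] (a : α) (f : α → M) :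
    ∑ᶠ x, (if x = a then f x else 0) = f a := by
  rw [finsum_eq_single _ a fun x hx => if_neg hx, if_pos rfl]

namespace TensorSystem

variable {R : Type*} [CommRing R] {I : Type*} (TS : TensorSystem R I)

theorem N_eq_one_of_ne_zero {a b c : I} (h : TS.N a b c ≠ 0) : TS.N a b c = 1 :=
  le_antisymm (TS.N_le_one a b c) (Nat.one_le_iff_ne_zero.mpr h)

theorem N_ne_zero_of_F_ne_zero {a b c d e f : I} (h : TS.F a b c d e f ≠ 0) :
    TS.N a b e ≠ 0 ∧ TS.N b c f ≠ 0 ∧ TS.N a f d ≠ 0 ∧ TS.N e c d ≠ 0 := by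
  simpa [and_assoc] using mt (TS.F_vanish a b c d e f) h

theorem N_ne_zero_of_Fbar_ne_zero {a b c d e f : I} (h : TS.Fbar a b c d f e ≠ 0) :
    TS.N a b e ≠ 0 ∧ TS.N b c f ≠ 0 ∧ TS.N a f d ≠ 0 ∧ TS.N e c d ≠ 0 := by
  simpa [and_assoc] using mt (TS.Fbar_vanish a b c d e f) h

theorem hasFiniteSupport_of_N {g : I → R} (a b : I) (h : ∀ x, g x ≠ 0 → TS.N a b x ≠ 0) :
    HasFiniteSupport g :=
  (TS.N_finite a b).subset h

theorem N_mul_N_mul_eq_self {a b c a' b' c' : I} {x : R}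
    (h : x ≠ 0 → TS.N a b c ≠ 0 ∧ TS.N a' b' c' ≠ 0) :
    (TS.N a b c : R) * TS.N a' b' c' * x = x := by
  by_cases hx : x = 0
  · simp [hx]
  · obtain ⟨h₁, h₂⟩ := h hx
    simp [TS.N_eq_one_of_ne_zero h₁, TS.N_eq_one_of_ne_zero h₂]

theorem finsum_Fbar_mul_finsum_F_mul (a b c d m : I) (P : I → R)
    (hP : P m ≠ 0 → TS.N b c m ≠ 0 ∧ TS.N a m d ≠ 0) :
    ∑ᶠ e, TS.Fbar a b c d m e * ∑ᶠ f, TS.F a b c d e f * P f = P m := by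
  calc ∑ᶠ e, TS.Fbar a b c d m e * ∑ᶠ f, TS.F a b c d e f * P f
      = ∑ᶠ e, ∑ᶠ f, TS.Fbar a b c d m e * (TS.F a b c d e f * P f) :=
        finsum_congr fun e => mul_finsum' _ _ <| TS.hasFiniteSupport_of_N b c fun f hf =>
          (TS.N_ne_zero_of_F_ne_zero (left_ne_zero_of_mul hf)).2.1
    _ = ∑ᶠ f, ∑ᶠ e, TS.Fbar a b c d m e * (TS.F a b c d e f * P f) :=
        finsum_comm_of_finite (TS.N_finite a b) (TS.N_finite b c) fun e f h =>
          ⟨(TS.N_ne_zero_of_Fbar_ne_zero (left_ne_zero_of_mul h)).1,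
            (TS.N_ne_zero_of_F_ne_zero (left_ne_zero_of_mul (right_ne_zero_of_mul h))).2.1⟩
    _ = ∑ᶠ f, (∑ᶠ e, TS.Fbar a b c d m e * TS.F a b c d e f) * P f := by
        refine finsum_congr fun f => ?_
        rw [finsum_mul' _ _ <| TS.hasFiniteSupport_of_N a b fun e he =>
          (TS.N_ne_zero_of_Fbar_ne_zero (left_ne_zero_of_mul he)).1]
        simp only [mul_assoc]
    _ = P m := by
        simp only [TS.Fbar_F, ite_mul, one_mul, zero_mul]
        rw [finsum_eq_single _ m fun f hf => if_neg hf, if_pos rfl]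
        exact TS.N_mul_N_mul_eq_self hP

theorem finsum_finsum_mul_F_mul_Fbar (a b c d m : I) (P : I → R)
    (hP : P m ≠ 0 → TS.N a b m ≠ 0 ∧ TS.N m c d ≠ 0) :
    ∑ᶠ f, (∑ᶠ e, P e * TS.F a b c d e f) * TS.Fbar a b c d f m = P m := by
  calc ∑ᶠ f, (∑ᶠ e, P e * TS.F a b c d e f) * TS.Fbar a b c d f m
      = ∑ᶠ f, ∑ᶠ e, P e * (TS.F a b c d e f * TS.Fbar a b c d f m) := by
        refine finsum_congr fun f => ?_
        rw [finsum_mul' _ _ <| TS.hasFiniteSupport_of_N a b fun e he =>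
          (TS.N_ne_zero_of_F_ne_zero (right_ne_zero_of_mul he)).1]
        simp only [mul_assoc]
    _ = ∑ᶠ e, ∑ᶠ f, P e * (TS.F a b c d e f * TS.Fbar a b c d f m) :=
        (finsum_comm_of_finite (TS.N_finite a b) (TS.N_finite b c) fun e f h =>
          ⟨(TS.N_ne_zero_of_F_ne_zero (left_ne_zero_of_mul (right_ne_zero_of_mul h))).1,
            (TS.N_ne_zero_of_F_ne_zero (left_ne_zero_of_mul (right_ne_zero_of_mul h))).2.1⟩).symm
    _ = ∑ᶠ e, P e * ∑ᶠ f, TS.F a b c d e f * TS.Fbar a b c d f m :=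
        finsum_congr fun e => (mul_finsum' _ _ <| TS.hasFiniteSupport_of_N b c fun f hf =>
          (TS.N_ne_zero_of_F_ne_zero (left_ne_zero_of_mul hf)).2.1).symm
    _ = P m := by
        simp only [TS.F_Fbar, ite_mul, one_mul, zero_mul, mul_ite, mul_zero]
        rw [finsum_eq_single _ m fun e he => if_neg he, if_pos rfl, mul_comm]
        exact TS.N_mul_N_mul_eq_self hP

/- Writing `pentagon` as `F₁ F₂ F₃ = F₄ F₅`, `pentagon_invₖ…` is the pentagon with the moves
`Fₖ, …` carried to the other side by `F_Fbar` and `Fbar_F`. -/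
theorem pentagon_inv₁ (a b c d e g k l m : I) :
    ∑ᶠ f, TS.Fbar a b c g m f * (TS.F f c d e g l * TS.F a b l e f k)
      = TS.F a m d e g k * TS.F b c d k m l := by
  simp only [← TS.pentagon, mul_assoc]
  exact TS.finsum_Fbar_mul_finsum_F_mul a b c g m _ fun h =>
    ⟨(TS.N_ne_zero_of_F_ne_zero (right_ne_zero_of_mul h)).1,
      (TS.N_ne_zero_of_F_ne_zero (left_ne_zero_of_mul h)).1⟩

theorem pentagon_inv₃ (a b c d e f g k n : I) :
    ∑ᶠ l, TS.F f c d e g l * TS.F a b l e f k * TS.Fbar b c d k l n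
      = TS.F a b c g f n * TS.F a n d e g k := by
  simp only [← TS.pentagon]
  exact TS.finsum_finsum_mul_F_mul_Fbar b c d k n _ fun h =>
    ⟨(TS.N_ne_zero_of_F_ne_zero (left_ne_zero_of_mul h)).2.1,
      (TS.N_ne_zero_of_F_ne_zero (right_ne_zero_of_mul h)).2.1⟩

theorem pentagon_inv₃₄ (a b c d e f k m n : I) :
    ∑ᶠ g, TS.Fbar f c d e m g * (TS.F a b c g f n * TS.F a n d e g k)
      = TS.F a b m e f k * TS.Fbar b c d k m n := by
  simp only [← TS.pentagon_inv₃, mul_assoc]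
  exact TS.finsum_Fbar_mul_finsum_F_mul f c d e m _ fun h =>
    ⟨(TS.N_ne_zero_of_Fbar_ne_zero (right_ne_zero_of_mul h)).2.1,
      (TS.N_ne_zero_of_F_ne_zero (left_ne_zero_of_mul h)).2.2.2⟩

theorem pentagon_inv₂₃₄ (a b c d e f g m n : I) :
    ∑ᶠ k, TS.F a b m e f k * TS.Fbar b c d k m n * TS.Fbar a n d e k g
      = TS.Fbar f c d e m g * TS.F a b c g f n := by
  simp only [← TS.pentagon_inv₃₄, ← mul_assoc]
  exact TS.finsum_finsum_mul_F_mul_Fbar a n d e g _ fun h =>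
    ⟨(TS.N_ne_zero_of_F_ne_zero (right_ne_zero_of_mul h)).2.2.1,
      (TS.N_ne_zero_of_Fbar_ne_zero (left_ne_zero_of_mul h)).2.2.2⟩

theorem finsum_triple_product (a b c d e f g ν₁ ν₂ ν₃ : I) :
    ∑ᶠ σ, TS.Fbar a b c f ν₁ σ * TS.F σ c d e f ν₂ * (TS.Fbar σ c d e ν₂ g * TS.F a b c g σ ν₃)
      = ∑ᶠ υ, TS.F b c d υ ν₁ ν₂ * TS.Fbar b c d υ ν₂ ν₃
          * (TS.F a ν₁ d e f υ * TS.Fbar a ν₃ d e υ g) := by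
  calc ∑ᶠ σ, TS.Fbar a b c f ν₁ σ * TS.F σ c d e f ν₂ * (TS.Fbar σ c d e ν₂ g * TS.F a b c g σ ν₃)
      = ∑ᶠ σ, ∑ᶠ υ, TS.Fbar a b c f ν₁ σ * TS.F σ c d e f ν₂
          * (TS.F a b ν₂ e σ υ * TS.Fbar b c d υ ν₂ ν₃ * TS.Fbar a ν₃ d e υ g) := by
        refine finsum_congr fun σ => ?_
        rw [← TS.pentagon_inv₂₃₄, mul_finsum' _ _ <| TS.hasFiniteSupport_of_N b ν₂ fun υ h =>
          (TS.N_ne_zero_of_F_ne_zero (left_ne_zero_of_mul (left_ne_zero_of_mul h))).2.1]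
    _ = ∑ᶠ υ, ∑ᶠ σ, TS.Fbar a b c f ν₁ σ * TS.F σ c d e f ν₂
          * (TS.F a b ν₂ e σ υ * TS.Fbar b c d υ ν₂ ν₃ * TS.Fbar a ν₃ d e υ g) :=
        finsum_comm_of_finite (TS.N_finite a b) (TS.N_finite b ν₂) fun σ υ h =>
          ⟨(TS.N_ne_zero_of_Fbar_ne_zero (left_ne_zero_of_mul (left_ne_zero_of_mul h))).1,
            (TS.N_ne_zero_of_F_ne_zero
              (left_ne_zero_of_mul (left_ne_zero_of_mul (right_ne_zero_of_mul h)))).2.1⟩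
    _ = ∑ᶠ υ, TS.F b c d υ ν₁ ν₂ * TS.Fbar b c d υ ν₂ ν₃
          * (TS.F a ν₁ d e f υ * TS.Fbar a ν₃ d e υ g) := by
        refine finsum_congr fun υ => ?_
        rw [show TS.F b c d υ ν₁ ν₂ * TS.Fbar b c d υ ν₂ ν₃
              * (TS.F a ν₁ d e f υ * TS.Fbar a ν₃ d e υ g)
            = TS.F a ν₁ d e f υ * TS.F b c d υ ν₁ ν₂
              * (TS.Fbar b c d υ ν₂ ν₃ * TS.Fbar a ν₃ d e υ g) by ring,
          ← TS.pentagon_inv₁, finsum_mul' _ _ <| TS.hasFiniteSupport_of_N a b fun σ h =>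
            (TS.N_ne_zero_of_Fbar_ne_zero (left_ne_zero_of_mul h)).1]
        exact finsum_congr fun σ => by ring

theorem mul_finsum_triple_product (a b c d e f g ν₁ ν₂ ν₃ : I) (r : R) :
    ∑ᶠ σ, r * (TS.Fbar a b c f ν₁ σ * TS.F σ c d e f ν₂
        * (TS.Fbar σ c d e ν₂ g * TS.F a b c g σ ν₃))
      = ∑ᶠ υ, r * (TS.F b c d υ ν₁ ν₂ * TS.Fbar b c d υ ν₂ ν₃
          * (TS.F a ν₁ d e f υ * TS.Fbar a ν₃ d e υ g)) := by
  rw [← mul_finsum', ← mul_finsum', finsum_triple_product]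
  · exact TS.hasFiniteSupport_of_N ν₁ d fun υ h =>
      (TS.N_ne_zero_of_F_ne_zero (left_ne_zero_of_mul (left_ne_zero_of_mul h))).2.2.2
  · exact TS.hasFiniteSupport_of_N a b fun σ h =>
      (TS.N_ne_zero_of_Fbar_ne_zero (left_ne_zero_of_mul (left_ne_zero_of_mul h))).1

section Paths

variable {TS} {L : ℕ} {I0 : Set I} {lam : ℕ → I} {i : ℕ}

theorem IsPath.update_of_N_ne_zero {μ : Fin (L + 1) → I} (hμ : TS.IsPath L I0 lam μ)
    (hi : 1 ≤ i) (hiL : i + 1 ≤ L) {s : I}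
    (h₁ : TS.N (μ ((i - 1 : ℕ) : Fin (L + 1))) (lam i) s ≠ 0)
    (h₂ : TS.N s (lam (i + 1)) (μ ((i + 1 : ℕ) : Fin (L + 1))) ≠ 0) :
    TS.IsPath L I0 lam (update μ ((i : ℕ) : Fin (L + 1)) s) := by
  have hne : ∀ {n : ℕ}, n ≤ L → n ≠ i → ((n : ℕ) : Fin (L + 1)) ≠ ((i : ℕ) : Fin (L + 1)) :=
    fun hn h => Fin.natCast_ne_natCast_s3 hn (by omega) h
  refine ⟨?_, fun j hj hjL => ?_⟩
  · rw [update_of_ne (by simpa using hne (Nat.zero_le L) (by omega))]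
    exact hμ.1
  rcases eq_or_ne j i with rfl | hji
  · rw [update_of_ne (hne (by omega) (by omega)), update_self]
    exact TS.N_eq_one_of_ne_zero h₁
  rcases eq_or_ne j (i + 1) with rfl | hji'
  · rw [Nat.add_sub_cancel, update_self, update_of_ne (hne hjL (by omega))]
    exact TS.N_eq_one_of_ne_zero h₂
  · rw [update_of_ne (hne (by omega) (by omega)), update_of_ne (hne hjL hji)]
    exact hμ.2 j hj hjL

theorem apply_eq_of_pMat_ne_zero {ν : I} {μ' μ : Fin (L + 1) → I}
    (h : TS.pMat L lam i ν μ' μ ≠ 0) : ∀ j ≠ ((i : ℕ) : Fin (L + 1)), μ j = μ' j := by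
  intro j hj
  by_contra hne
  apply h
  rw [pMat, Finset.prod_eq_zero (Finset.mem_erase.mpr ⟨hj, Finset.mem_univ j⟩) (if_neg hne),
    zero_mul, zero_mul]

theorem N_ne_zero_of_pMat_ne_zero {ν : I} {μ' μ : Fin (L + 1) → I}
    (h : TS.pMat L lam i ν μ' μ ≠ 0) :
    TS.N (μ ((i - 1 : ℕ) : Fin (L + 1))) (lam i) (μ' ((i : ℕ) : Fin (L + 1))) ≠ 0
      ∧ TS.N (μ' ((i : ℕ) : Fin (L + 1))) (lam (i + 1)) (μ ((i + 1 : ℕ) : Fin (L + 1))) ≠ 0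
      ∧ TS.N (μ ((i - 1 : ℕ) : Fin (L + 1))) (lam i) (μ ((i : ℕ) : Fin (L + 1))) ≠ 0
      ∧ TS.N (μ ((i : ℕ) : Fin (L + 1))) (lam (i + 1)) (μ ((i + 1 : ℕ) : Fin (L + 1))) ≠ 0 := by
  rw [pMat] at h
  have hFbar := TS.N_ne_zero_of_Fbar_ne_zero (right_ne_zero_of_mul (left_ne_zero_of_mul h))
  have hF := TS.N_ne_zero_of_F_ne_zero (right_ne_zero_of_mul h)
  exact ⟨hFbar.1, hFbar.2.2.2, hF.1, hF.2.2.2⟩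

theorem IsPath.of_pMat_ne_zero_left {ν : I} {μ' μ : Fin (L + 1) → I}
    (hμ : TS.IsPath L I0 lam μ) (hi : 1 ≤ i) (hiL : i + 1 ≤ L)
    (h : TS.pMat L lam i ν μ' μ ≠ 0) : TS.IsPath L I0 lam μ' := by
  have hμ' : μ' = update μ ((i : ℕ) : Fin (L + 1)) (μ' ((i : ℕ) : Fin (L + 1))) :=
    eq_update_iff.mpr ⟨rfl, fun j hj => (apply_eq_of_pMat_ne_zero h j hj).symm⟩
  have hN := N_ne_zero_of_pMat_ne_zero h
  rw [hμ']
  exact hμ.update_of_N_ne_zero hi hiL hN.1 hN.2.1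

theorem IsPath.of_pMat_ne_zero_right {ν : I} {μ' μ : Fin (L + 1) → I}
    (hμ' : TS.IsPath L I0 lam μ') (hi : 1 ≤ i) (hiL : i + 1 ≤ L)
    (h : TS.pMat L lam i ν μ' μ ≠ 0) : TS.IsPath L I0 lam μ := by
  have hagree := apply_eq_of_pMat_ne_zero h
  have hμ : μ = update μ' ((i : ℕ) : Fin (L + 1)) (μ ((i : ℕ) : Fin (L + 1))) :=
    eq_update_iff.mpr ⟨rfl, hagree⟩
  have hN := N_ne_zero_of_pMat_ne_zero h
  rw [hagree _ (Fin.natCast_ne_natCast_s3 (by omega) (by omega) (by omega)),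
    hagree ((i + 1 : ℕ) : Fin (L + 1)) (Fin.natCast_ne_natCast_s3 hiL (by omega) (by omega))] at hN
  rw [hμ]
  exact hμ'.update_of_N_ne_zero hi hiL hN.2.2.1 hN.2.2.2

theorem mulMat_pMat_left {ν : I} {μ' : Fin (L + 1) → I} (hμ' : TS.IsPath L I0 lam μ')
    (hi : 1 ≤ i) (hiL : i + 1 ≤ L) (B : (Fin (L + 1) → I) → (Fin (L + 1) → I) → R)
    (μ : Fin (L + 1) → I) :
    TS.mulMat L I0 lam (TS.pMat L lam i ν) B μ' μ
      = ∑ᶠ s, TS.pMat L lam i ν μ' (update μ' ((i : ℕ) : Fin (L + 1)) s)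
          * B (update μ' ((i : ℕ) : Fin (L + 1)) s) μ :=
  finsum_mem_eq_finsum_update μ' _ fun _ hw =>
    ⟨hμ'.of_pMat_ne_zero_right hi hiL (left_ne_zero_of_mul hw),
      apply_eq_of_pMat_ne_zero (left_ne_zero_of_mul hw)⟩

theorem mulMat_pMat_right {ν : I} {μ : Fin (L + 1) → I} (hμ : TS.IsPath L I0 lam μ)
    (hi : 1 ≤ i) (hiL : i + 1 ≤ L) (A : (Fin (L + 1) → I) → (Fin (L + 1) → I) → R)
    (μ' : Fin (L + 1) → I) :
    TS.mulMat L I0 lam A (TS.pMat L lam i ν) μ' μ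
      = ∑ᶠ s, A μ' (update μ ((i : ℕ) : Fin (L + 1)) s)
          * TS.pMat L lam i ν (update μ ((i : ℕ) : Fin (L + 1)) s) μ :=
  finsum_mem_eq_finsum_update μ _ fun _ hw =>
    ⟨hμ.of_pMat_ne_zero_left hi hiL (right_ne_zero_of_mul hw),
      fun j hj => (apply_eq_of_pMat_ne_zero (right_ne_zero_of_mul hw) j hj).symm⟩

theorem pMat_update_left (ν s : I) (μ : Fin (L + 1) → I) :
    TS.pMat L lam i ν (update μ ((i : ℕ) : Fin (L + 1)) s) μ
      = TS.Fbar (μ ((i - 1 : ℕ) : Fin (L + 1))) (lam i) (lam (i + 1))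
          (μ ((i + 1 : ℕ) : Fin (L + 1))) ν s
        * TS.F (μ ((i - 1 : ℕ) : Fin (L + 1))) (lam i) (lam (i + 1))
          (μ ((i + 1 : ℕ) : Fin (L + 1))) (μ ((i : ℕ) : Fin (L + 1))) ν := by
  rw [pMat,
    Finset.prod_eq_one fun j hj => if_pos (update_of_ne (Finset.mem_erase.mp hj).1 s μ).symm,
    update_self, one_mul]

theorem pMat_update_right (hi : 1 ≤ i) (hiL : i + 1 ≤ L) (ν s : I) (μ' : Fin (L + 1) → I) :
    TS.pMat L lam i ν μ' (update μ' ((i : ℕ) : Fin (L + 1)) s)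
      = TS.Fbar (μ' ((i - 1 : ℕ) : Fin (L + 1))) (lam i) (lam (i + 1))
          (μ' ((i + 1 : ℕ) : Fin (L + 1))) ν (μ' ((i : ℕ) : Fin (L + 1)))
        * TS.F (μ' ((i - 1 : ℕ) : Fin (L + 1))) (lam i) (lam (i + 1))
          (μ' ((i + 1 : ℕ) : Fin (L + 1))) s ν := by
  rw [pMat, Finset.prod_eq_one fun j hj => if_pos (update_of_ne (Finset.mem_erase.mp hj).1 s μ'),
    update_self, update_of_ne (Fin.natCast_ne_natCast_s3 (by omega) (by omega) (by omega)),
    update_of_ne (Fin.natCast_ne_natCast_s3 hiL (by omega) (by omega)), one_mul]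

theorem pMat_succ_update_update (hiL : i + 2 ≤ L) (ν s σ : I) (μ' μ : Fin (L + 1) → I) :
    TS.pMat L lam (i + 1) ν (update μ' ((i : ℕ) : Fin (L + 1)) s)
        (update μ ((i : ℕ) : Fin (L + 1)) σ)
      = (if σ = s then 1 else 0)
        * (∏ j ∈ (Finset.univ.erase ((i : ℕ) : Fin (L + 1))).erase ((i + 1 : ℕ) : Fin (L + 1)),
            if μ j = μ' j then (1 : R) else 0)
        * TS.Fbar σ (lam (i + 1)) (lam (i + 2)) (μ ((i + 2 : ℕ) : Fin (L + 1))) ν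
            (μ' ((i + 1 : ℕ) : Fin (L + 1)))
        * TS.F σ (lam (i + 1)) (lam (i + 2)) (μ ((i + 2 : ℕ) : Fin (L + 1)))
            (μ ((i + 1 : ℕ) : Fin (L + 1))) ν := by
  have hi₁ : ((i : ℕ) : Fin (L + 1)) ≠ ((i + 1 : ℕ) : Fin (L + 1)) :=
    Fin.natCast_ne_natCast_s3 (by omega) (by omega) (by omega)
  have hi₂ : ((i + 2 : ℕ) : Fin (L + 1)) ≠ ((i : ℕ) : Fin (L + 1)) :=
    Fin.natCast_ne_natCast_s3 hiL (by omega) (by omega)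
  rw [pMat, ← Finset.mul_prod_erase _ _ (Finset.mem_erase.mpr ⟨hi₁, Finset.mem_univ _⟩),
    Finset.erase_right_comm, Finset.prod_congr rfl fun j hj => by
      rw [update_of_ne (Finset.mem_erase.mp (Finset.mem_erase.mp hj).2).1,
        update_of_ne (Finset.mem_erase.mp (Finset.mem_erase.mp hj).2).1]]
  simp only [Nat.add_sub_cancel, update_self, update_of_ne hi₁.symm, update_of_ne hi₂]

end Paths

end TensorSystem

theorem triple_product_matrix_elements_up_general
    {R : Type*} [CommRing R] {I : Type*}
    (TS : TensorSystem R I) (L : ℕ) (I0 : Set I)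
    (lam : ℕ → I) (ν₁ ν₂ ν₃ : I) (i : ℕ) (hi : 1 ≤ i) (hiL : i + 2 ≤ L)
    (μ μ''' : Fin (L + 1) → I)
    (hμ : TS.IsPath L I0 lam μ) (hμ''' : TS.IsPath L I0 lam μ''') :
    TS.mulMat L I0 lam (TS.pMat L lam i ν₃)
      (TS.mulMat L I0 lam (TS.pMat L lam (i + 1) ν₂) (TS.pMat L lam i ν₁)) μ''' μ
    = ∑ᶠ υ : I,
      ((∏ j ∈ (Finset.univ.erase ((i : ℕ) : Fin (L + 1))).erase ((i + 1 : ℕ) : Fin (L + 1)),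
          if μ j = μ''' j then (1 : R) else 0)
        * TS.F (lam i) (lam (i + 1)) (lam (i + 2)) υ ν₁ ν₂
        * TS.Fbar (lam i) (lam (i + 1)) (lam (i + 2)) υ ν₂ ν₃
        * TS.Fbar (μ ((i - 1 : ℕ) : Fin (L + 1))) (lam i) (lam (i + 1)) (μ''' ((i + 1 : ℕ) : Fin (L + 1))) ν₃ (μ''' ((i : ℕ) : Fin (L + 1)))
        * TS.F (μ ((i - 1 : ℕ) : Fin (L + 1))) (lam i) (lam (i + 1)) (μ ((i + 1 : ℕ) : Fin (L + 1))) (μ ((i : ℕ) : Fin (L + 1))) ν₁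
        * TS.F (μ ((i - 1 : ℕ) : Fin (L + 1))) ν₁ (lam (i + 2)) (μ ((i + 2 : ℕ) : Fin (L + 1))) (μ ((i + 1 : ℕ) : Fin (L + 1))) υ
        * TS.Fbar (μ ((i - 1 : ℕ) : Fin (L + 1))) ν₃ (lam (i + 2)) (μ ((i + 2 : ℕ) : Fin (L + 1))) υ (μ''' ((i + 1 : ℕ) : Fin (L + 1)))) := by
  have hi₁ : i + 1 ≤ L := by omega
  rw [TensorSystem.mulMat_pMat_left hμ''' hi hi₁]
  simp only [TensorSystem.mulMat_pMat_right hμ hi hi₁, TensorSystem.pMat_update_left,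
    TensorSystem.pMat_update_right hi hi₁, TensorSystem.pMat_succ_update_update hiL,
    mul_assoc, ite_mul, one_mul, zero_mul, finsum_ite_eq]
  set D := ∏ j ∈ (Finset.univ.erase ((i : ℕ) : Fin (L + 1))).erase ((i + 1 : ℕ) : Fin (L + 1)),
    if μ j = μ''' j then (1 : R) else 0
  -- The claimed formula reads site `i - 1` from `μ`, the left factor from `μ'''`.
  by_cases hA : μ''' ((i - 1 : ℕ) : Fin (L + 1)) = μ ((i - 1 : ℕ) : Fin (L + 1))
  · rw [hA]
    refine (finsum_congr fun s => ?_).trans ((TS.mul_finsum_triple_product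
      (μ ((i - 1 : ℕ) : Fin (L + 1))) (lam i) (lam (i + 1)) (lam (i + 2))
      (μ ((i + 2 : ℕ) : Fin (L + 1))) (μ ((i + 1 : ℕ) : Fin (L + 1)))
      (μ''' ((i + 1 : ℕ) : Fin (L + 1))) ν₁ ν₂ ν₃
      (D * TS.Fbar (μ ((i - 1 : ℕ) : Fin (L + 1))) (lam i) (lam (i + 1))
          (μ''' ((i + 1 : ℕ) : Fin (L + 1))) ν₃ (μ''' ((i : ℕ) : Fin (L + 1)))
        * TS.F (μ ((i - 1 : ℕ) : Fin (L + 1))) (lam i) (lam (i + 1))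
          (μ ((i + 1 : ℕ) : Fin (L + 1))) (μ ((i : ℕ) : Fin (L + 1))) ν₁)).trans
      (finsum_congr fun υ => ?_)) <;> ring
  · have hD : D = 0 := Finset.prod_eq_zero (i := ((i - 1 : ℕ) : Fin (L + 1)))
      (Finset.mem_erase.mpr ⟨Fin.natCast_ne_natCast_s3 (by omega) hi₁ (by omega),
        Finset.mem_erase.mpr ⟨Fin.natCast_ne_natCast_s3 (by omega) (by omega) (by omega),
          Finset.mem_univ _⟩⟩) (if_neg (Ne.symm hA))
    simp only [hD, zero_mul, mul_zero, finsum_zero]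

/-- matrix elements of `p_i^{(ν₃)} p_{i+1}^{(ν₂)} p_i^{(ν₁)}`. -/
theorem triple_product_matrix_elements_up
    {R : Type*} [CommRing R] {I : Type*}
    (TS : TensorSystem R I) (L : ℕ) (I0 : Set I) (hI0 : I0.Finite)
    (lam : ℕ → I) (ν₁ ν₂ ν₃ : I) (i : ℕ) (hi : 1 ≤ i) (hiL : i + 2 ≤ L)
    (μ μ''' : Fin (L + 1) → I)
    (hμ : TS.IsPath L I0 lam μ) (hμ''' : TS.IsPath L I0 lam μ''') :
    TS.mulMat L I0 lam (TS.pMat L lam i ν₃)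
      (TS.mulMat L I0 lam (TS.pMat L lam (i + 1) ν₂) (TS.pMat L lam i ν₁)) μ''' μ
    = ∑ᶠ υ : I,
      ((∏ j ∈ (Finset.univ.erase ((i : ℕ) : Fin (L + 1))).erase ((i + 1 : ℕ) : Fin (L + 1)),
          if μ j = μ''' j then (1 : R) else 0)
        * TS.F (lam i) (lam (i + 1)) (lam (i + 2)) υ ν₁ ν₂
        * TS.Fbar (lam i) (lam (i + 1)) (lam (i + 2)) υ ν₂ ν₃
        * TS.Fbar (μ ((i - 1 : ℕ) : Fin (L + 1))) (lam i) (lam (i + 1)) (μ''' ((i + 1 : ℕ) : Fin (L + 1))) ν₃ (μ''' ((i : ℕ) : Fin (L + 1)))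
        * TS.F (μ ((i - 1 : ℕ) : Fin (L + 1))) (lam i) (lam (i + 1)) (μ ((i + 1 : ℕ) : Fin (L + 1))) (μ ((i : ℕ) : Fin (L + 1))) ν₁
        * TS.F (μ ((i - 1 : ℕ) : Fin (L + 1))) ν₁ (lam (i + 2)) (μ ((i + 2 : ℕ) : Fin (L + 1))) (μ ((i + 1 : ℕ) : Fin (L + 1))) υ
        * TS.Fbar (μ ((i - 1 : ℕ) : Fin (L + 1))) ν₃ (lam (i + 2)) (μ ((i + 2 : ℕ) : Fin (L + 1))) υ (μ''' ((i + 1 : ℕ) : Fin (L + 1)))) :=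
  triple_product_matrix_elements_up_general TS L I0 lam ν₁ ν₂ ν₃ i hi hiL μ μ''' hμ hμ'''
end
end
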